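/- Let f : (a,b) → ℝ be locally integrable satisfying osc(f,I) = (1/4)|Df|(I) for all open intervals I ⊂⊂ (a,b). Then for every interval (x,y) ⊂⊂ (a,b), the oscillation is controlled by the endpoint deviation: osc(f,(x,y)) ≤ 2|f(y) - m_{x,y}|, where m_{x,y} := (1/(y-x))∫_x^y f. -/

import Mathlib

open MeasureTheory Set Filter
open scoped ENNReal

/-- Mean oscillation of `f` over the interval `(x, y)`. -/
noncomputable def oscI (f : ℝ → ℝ) (x y : ℝ) : ℝ :=
  (y - x)⁻¹ * ∫ t in x..y, |f t - (y - x)⁻¹ * ∫ s in x..y, f s|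

/-- Total variation of the distributional derivative of `f` on `(x, y)`:
the supremum of `∫ f φ'` over smooth `φ` supported in `(x, y)` with `‖φ‖_∞ ≤ 1`. -/
noncomputable def varD (f : ℝ → ℝ) (x y : ℝ) : ℝ≥0∞ :=
  ⨆ φ : {φ : ℝ → ℝ // ContDiff ℝ (⊤ : ℕ∞) φ ∧ HasCompactSupport φ ∧
      tsupport φ ⊆ Set.Ioo x y ∧ ∀ t, |φ t| ≤ 1},
    ENNReal.ofReal (∫ t in x..y, f t * deriv (φ : ℝ → ℝ) t)

lemma oscI_nonneg (f : ℝ → ℝ) {x y : ℝ} (h : x ≤ y) : 0 ≤ oscI f x y := by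
  apply mul_nonneg
  · simp only [inv_nonneg]; linarith
  · exact intervalIntegral.integral_nonneg h (fun _ _ => abs_nonneg _)

lemma testfun_nonempty (x y : ℝ) :
    Nonempty {φ : ℝ → ℝ // ContDiff ℝ (⊤ : ℕ∞) φ ∧ HasCompactSupport φ ∧
      tsupport φ ⊆ Set.Ioo x y ∧ ∀ t, |φ t| ≤ 1} := by
  refine ⟨⟨0, contDiff_const, ?_, ?_, fun t => by simp⟩⟩
  · simpa [HasCompactSupport] using isCompact_empty.of_isClosed_subset isClosed_closure
      (by simp [tsupport, Function.support])
  · simp [tsupport, Function.support]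

lemma mul_deriv_intervalIntegrable {f φ : ℝ → ℝ} {u v x y : ℝ}
    (hfi : IntegrableOn f (Set.uIcc x y)) (huv : Set.uIcc u v ⊆ Set.uIcc x y)
    (hφ : ContDiff ℝ (⊤ : ℕ∞) φ) (hφc : HasCompactSupport φ) :
    IntervalIntegrable (fun s => f s * deriv φ s) volume u v := by
  have hcd : Continuous (deriv φ) := hφ.continuous_deriv (by simp)
  have hbd : ∃ C, ∀ s, ‖deriv φ s‖ ≤ C := hφc.deriv.exists_bound_of_continuous hcd
  have : IntegrableOn (fun s => deriv φ s * f s) (Set.uIcc x y) :=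
    Integrable.bdd_mul hfi hcd.aestronglyMeasurable.restrict (ae_of_all _ hbd.choose_spec)
  have := (this.mono_set huv)
  refine IntegrableOn.intervalIntegrable ?_
  simpa [mul_comm] using this

lemma integral_mul_deriv_eq_of_tsupport {f φ : ℝ → ℝ} {u v x y : ℝ}
    (hx : x ≤ u) (huv : u ≤ v) (hvy : v ≤ y)
    (hfi : IntegrableOn f (Set.uIcc x y))
    (hφ : ContDiff ℝ (⊤ : ℕ∞) φ) (hφc : HasCompactSupport φ)
    (hs : tsupport φ ⊆ Set.Ioo u v) :
    (∫ s in x..y, f s * deriv φ s) = ∫ s in u..v, f s * deriv φ s := by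
  have hder0 : ∀ s, s ∉ Set.Ioo u v → deriv φ s = 0 := by
    intro s hsn
    by_contra h
    exact hsn (hs (support_deriv_subset (by simpa [Function.support] using h)))
  have hxy : x ≤ y := le_trans hx (le_trans huv hvy)
  have h1 : (∫ s in x..u, f s * deriv φ s) = 0 := by
    rw [intervalIntegral.integral_congr (g := fun _ => (0:ℝ)) ?_, intervalIntegral.integral_zero]
    intro s hsm
    rw [Set.uIcc_of_le hx] at hsm
    have : s ∉ Set.Ioo u v := fun hc => absurd hsm.2 (not_le.mpr hc.1)
    simp [hder0 s this]
  have h2 : (∫ s in v..y, f s * deriv φ s) = 0 := by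
    rw [intervalIntegral.integral_congr (g := fun _ => (0:ℝ)) ?_, intervalIntegral.integral_zero]
    intro s hsm
    rw [Set.uIcc_of_le hvy] at hsm
    have : s ∉ Set.Ioo u v := fun hc => absurd hsm.1 (not_le.mpr hc.2)
    simp [hder0 s this]
  have s1 : Set.uIcc x u ⊆ Set.uIcc x y := by
    rw [Set.uIcc_of_le hx, Set.uIcc_of_le hxy]
    exact Set.Icc_subset_Icc le_rfl (le_trans huv hvy)
  have s2 : Set.uIcc u v ⊆ Set.uIcc x y := by
    rw [Set.uIcc_of_le huv, Set.uIcc_of_le hxy]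
    exact Set.Icc_subset_Icc hx hvy
  have s3 : Set.uIcc v y ⊆ Set.uIcc x y := by
    rw [Set.uIcc_of_le hvy, Set.uIcc_of_le hxy]
    exact Set.Icc_subset_Icc (le_trans hx huv) le_rfl
  have i1 : IntervalIntegrable (fun s => f s * deriv φ s) volume x u :=
    mul_deriv_intervalIntegrable hfi s1 hφ hφc
  have i2 : IntervalIntegrable (fun s => f s * deriv φ s) volume u v :=
    mul_deriv_intervalIntegrable hfi s2 hφ hφc
  have i3 : IntervalIntegrable (fun s => f s * deriv φ s) volume v y :=
    mul_deriv_intervalIntegrable hfi s3 hφ hφc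
  have := intervalIntegral.integral_add_adjacent_intervals (i1.trans i2) i3
  rw [← intervalIntegral.integral_add_adjacent_intervals i1 i2] at this
  rw [← this, h1, h2]
  ring

lemma varD_superadd {f : ℝ → ℝ} {x t y : ℝ} (hxt : x < t) (hty : t < y)
    (hfi : IntegrableOn f (Set.uIcc x y)) :
    varD f x t + varD f t y ≤ varD f x y := by
  have hxy : x ≤ y := le_trans hxt.le hty.le
  haveI := testfun_nonempty x t
  haveI := testfun_nonempty t y
  rw [varD, varD]
  refine ENNReal.iSup_add_iSup_le ?_
  rintro ⟨φ₁, h₁d, h₁c, h₁s, h₁b⟩ ⟨φ₂, h₂d, h₂c, h₂s, h₂b⟩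
  simp only
  set I₁ := ∫ s in x..t, f s * deriv φ₁ s with hI1
  set I₂ := ∫ s in t..y, f s * deriv φ₂ s with hI2
  have hJ1 : (∫ s in x..y, f s * deriv φ₁ s) = I₁ :=
    integral_mul_deriv_eq_of_tsupport le_rfl hxt.le hty.le hfi h₁d h₁c h₁s
  have hJ2 : (∫ s in x..y, f s * deriv φ₂ s) = I₂ :=
    integral_mul_deriv_eq_of_tsupport hxt.le hty.le le_rfl hfi h₂d h₂c h₂s
  have mem1 : ENNReal.ofReal I₁ ≤ varD f x y := by
    rw [← hJ1]
    exact le_iSup (fun ψ : {φ : ℝ → ℝ // ContDiff ℝ (⊤ : ℕ∞) φ ∧ HasCompactSupport φ ∧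
      tsupport φ ⊆ Set.Ioo x y ∧ ∀ t, |φ t| ≤ 1} =>
        ENNReal.ofReal (∫ s in x..y, f s * deriv (ψ : ℝ → ℝ) s))
      ⟨φ₁, h₁d, h₁c, h₁s.trans (Set.Ioo_subset_Ioo le_rfl hty.le), h₁b⟩
  have mem2 : ENNReal.ofReal I₂ ≤ varD f x y := by
    rw [← hJ2]
    exact le_iSup (fun ψ : {φ : ℝ → ℝ // ContDiff ℝ (⊤ : ℕ∞) φ ∧ HasCompactSupport φ ∧
      tsupport φ ⊆ Set.Ioo x y ∧ ∀ t, |φ t| ≤ 1} =>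
        ENNReal.ofReal (∫ s in x..y, f s * deriv (ψ : ℝ → ℝ) s))
      ⟨φ₂, h₂d, h₂c, h₂s.trans (Set.Ioo_subset_Ioo hxt.le le_rfl), h₂b⟩
  rcases le_or_gt I₁ 0 with h1 | h1
  · rw [ENNReal.ofReal_eq_zero.mpr h1, zero_add]; exact mem2
  rcases le_or_gt I₂ 0 with h2 | h2
  · rw [ENNReal.ofReal_eq_zero.mpr h2, add_zero]; exact mem1
  -- both positive: combine
  rw [← ENNReal.ofReal_add h1.le h2.le]
  have hdisj : ∀ s, φ₁ s = 0 ∨ φ₂ s = 0 := by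
    intro s
    rcases le_or_gt s t with h | h
    · right
      by_contra hc
      have := h₂s (subset_tsupport _ (by simpa [Function.support] using hc))
      exact absurd this.1 (not_lt.mpr h)
    · left
      by_contra hc
      have := h₁s (subset_tsupport _ (by simpa [Function.support] using hc))
      exact absurd this.2 (not_lt.mpr h.le)
  set ψ : ℝ → ℝ := fun s => φ₁ s + φ₂ s with hψ
  have hψd : ContDiff ℝ (⊤ : ℕ∞) ψ := h₁d.add h₂d
  have hψc : HasCompactSupport ψ := h₁c.add h₂c
  have hψs : tsupport ψ ⊆ Set.Ioo x y := by
    refine (tsupport_add φ₁ φ₂).trans ?_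
    exact Set.union_subset (h₁s.trans (Set.Ioo_subset_Ioo le_rfl hty.le))
      (h₂s.trans (Set.Ioo_subset_Ioo hxt.le le_rfl))
  have hψb : ∀ s, |ψ s| ≤ 1 := by
    intro s
    rcases hdisj s with h | h <;> simp [hψ, h, h₁b s, h₂b s]
  have hderadd : ∀ s, deriv ψ s = deriv φ₁ s + deriv φ₂ s := by
    intro s
    exact deriv_add ((h₁d.differentiable (by simp)) s) ((h₂d.differentiable (by simp)) s)
  have hint : (∫ s in x..y, f s * deriv ψ s) = I₁ + I₂ := by
    have e1 : IntervalIntegrable (fun s => f s * deriv φ₁ s) volume x y :=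
      mul_deriv_intervalIntegrable hfi le_rfl.subset h₁d h₁c
    have e2 : IntervalIntegrable (fun s => f s * deriv φ₂ s) volume x y :=
      mul_deriv_intervalIntegrable hfi le_rfl.subset h₂d h₂c
    calc (∫ s in x..y, f s * deriv ψ s)
        = ∫ s in x..y, (f s * deriv φ₁ s + f s * deriv φ₂ s) := by
          apply intervalIntegral.integral_congr
          intro s _
          simp only [hderadd s]
          ring
      _ = (∫ s in x..y, f s * deriv φ₁ s) + ∫ s in x..y, f s * deriv φ₂ s :=
          intervalIntegral.integral_add e1 e2
      _ = I₁ + I₂ := by rw [hJ1, hJ2]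
  rw [← hint]
  exact le_iSup (fun χ : {φ : ℝ → ℝ // ContDiff ℝ (⊤ : ℕ∞) φ ∧ HasCompactSupport φ ∧
      tsupport φ ⊆ Set.Ioo x y ∧ ∀ t, |φ t| ≤ 1} =>
        ENNReal.ofReal (∫ s in x..y, f s * deriv (χ : ℝ → ℝ) s))
    ⟨ψ, hψd, hψc, hψs, hψb⟩

/-- If a continuous locally integrable `f` satisfies `osc(f,I) = (1/4)|Df|(I)` for all
intervals `I ⊂⊂ (a,b)`, then `osc(f,(x,y)) ≤ 2|f(y) - m_{x,y}|` where `m_{x,y}` is the mean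
of `f` over `(x, y)`. -/
theorem osc_le_endpoint_deviation (a b : ℝ) (hab : a < b) (f : ℝ → ℝ)
    (hf : LocallyIntegrableOn f (Set.Ioo a b))
    (hcont : ContinuousOn f (Set.Ioo a b))
    (hid : ∀ x y, a < x → x < y → y < b →
      varD f x y = 4 * ENNReal.ofReal (oscI f x y)) :
    ∀ x y, a < x → x < y → y < b →
      oscI f x y ≤ 2 * |f y - (y - x)⁻¹ * ∫ s in x..y, f s| := by
  intro x y hax hxy hyb
  set m : ℝ := (y - x)⁻¹ * ∫ s in x..y, f s with hm
  have hxy' : (0:ℝ) < y - x := by linarith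
  have hfIcc : IntegrableOn f (Set.Icc x y) := by
    apply hf.integrableOn_compact_subset ?_ isCompact_Icc
    intro s hs
    exact ⟨lt_of_lt_of_le hax hs.1, lt_of_le_of_lt hs.2 hyb⟩
  have hfuIcc : IntegrableOn f (Set.uIcc x y) := by rwa [Set.uIcc_of_le hxy.le]
  -- superadditivity of oscI
  have hsuper : ∀ t, x < t → t < y → oscI f x t + oscI f t y ≤ oscI f x y := by
    intro t hxt hty
    have hv := varD_superadd hxt hty hfuIcc
    rw [hid x t hax hxt (hty.trans hyb), hid t y (hax.trans hxt) hty hyb,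
      hid x y hax hxy hyb] at hv
    have h4 : (4:ℝ≥0∞) * (ENNReal.ofReal (oscI f x t) + ENNReal.ofReal (oscI f t y)) ≤
        4 * ENNReal.ofReal (oscI f x y) := by
      rw [mul_add]; exact hv
    have := (ENNReal.mul_le_mul_iff_right (by norm_num) (by norm_num)).mp h4
    rw [← ENNReal.ofReal_add (oscI_nonneg f hxt.le) (oscI_nonneg f hty.le)] at this
    exact (ENNReal.ofReal_le_ofReal_iff (oscI_nonneg f hxy.le)).mp this
  -- epsilon argument
  refine le_of_forall_pos_le_add ?_
  intro ε hε
  have hyI : y ∈ Set.Ioo a b := ⟨hax.trans hxy, hyb⟩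
  have hcy : ContinuousAt f y := hcont.continuousAt (isOpen_Ioo.mem_nhds hyI)
  obtain ⟨δ, hδ, hδ'⟩ := Metric.continuousAt_iff.mp hcy (ε/2) (by linarith)
  set t : ℝ := max ((x+y)/2) (y - δ/2) with ht
  have hxt : x < t := lt_of_lt_of_le (by linarith) (le_max_left _ _)
  have hty : t < y := max_lt (by linarith) (by linarith)
  have hytδ : y - t ≤ δ/2 := by
    have := le_max_right ((x+y)/2) (y - δ/2)
    linarith
  have hyt' : (0:ℝ) < y - t := by linarith
  -- integrability of |f - m| pieces
  have hgi : ∀ u v, x ≤ u → u ≤ v → v ≤ y → ∀ c : ℝ,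
      IntervalIntegrable (fun s => |f s - c|) volume u v := by
    intro u v hu huv hv c
    apply IntegrableOn.intervalIntegrable
    rw [Set.uIcc_of_le huv]
    exact (((hfIcc.mono_set (Set.Icc_subset_Icc hu hv)).sub
      ((integrableOn_const_iff (C := c)).mpr (Or.inr (by exact measure_Icc_lt_top)))).abs)
  have hfi' : ∀ u v, x ≤ u → u ≤ v → v ≤ y → ∀ c : ℝ,
      IntervalIntegrable (fun s => f s - c) volume u v := by
    intro u v hu huv hv c
    apply IntegrableOn.intervalIntegrable
    rw [Set.uIcc_of_le huv]
    exact ((hfIcc.mono_set (Set.Icc_subset_Icc hu hv)).sub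
      ((integrableOn_const_iff (C := c)).mpr (Or.inr (by exact measure_Icc_lt_top))))
  -- ∫ (f - m) over (x,y) is 0
  have hfint : IntervalIntegrable f volume x y := hfuIcc.intervalIntegrable
  have h0 : (∫ s in x..y, (f s - m)) = 0 := by
    rw [intervalIntegral.integral_sub hfint intervalIntegrable_const,
      intervalIntegral.integral_const, smul_eq_mul, hm]
    field_simp
    simp
  -- split the oscillation integral
  have hsplit : (∫ s in x..y, |f s - m|) =
      (∫ s in x..t, |f s - m|) + ∫ s in t..y, |f s - m| := by
    rw [intervalIntegral.integral_add_adjacent_intervals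
      (hgi x t le_rfl hxt.le hty.le m) (hgi t y hxt.le hty.le le_rfl m)]
  -- ∫_x^t (f-m) = -∫_t^y (f-m)
  have hneg : (∫ s in x..t, (f s - m)) = -∫ s in t..y, (f s - m) := by
    have := intervalIntegral.integral_add_adjacent_intervals
      (hfi' x t le_rfl hxt.le hty.le m) (hfi' t y hxt.le hty.le le_rfl m)
    rw [h0] at this
    linarith
  set mxt : ℝ := (t - x)⁻¹ * ∫ s in x..t, f s with hmxt
  have htx' : (0:ℝ) < t - x := by linarith
  -- key bound on the left piece
  have hleft : (∫ s in x..t, |f s - m|) ≤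
      (∫ s in x..t, |f s - mxt|) + |∫ s in t..y, (f s - m)| := by
    have hconst : (∫ s in x..t, (f s - m)) = (t - x) * (mxt - m) := by
      rw [intervalIntegral.integral_sub (IntegrableOn.intervalIntegrable
          (by rw [Set.uIcc_of_le hxt.le]; exact hfIcc.mono_set (Set.Icc_subset_Icc le_rfl hty.le)))
        intervalIntegrable_const, intervalIntegral.integral_const, smul_eq_mul, hmxt]
      field_simp
    have hpt : ∀ s ∈ Set.Icc x t, |f s - m| ≤ |f s - mxt| + |mxt - m| := by
      intro s _
      have : f s - m = (f s - mxt) + (mxt - m) := by ring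
      rw [this]
      exact abs_add_le _ _
    calc (∫ s in x..t, |f s - m|)
        ≤ ∫ s in x..t, (|f s - mxt| + |mxt - m|) := by
          apply intervalIntegral.integral_mono_on hxt.le (hgi x t le_rfl hxt.le hty.le m)
            ((hgi x t le_rfl hxt.le hty.le mxt).add intervalIntegrable_const) hpt
      _ = (∫ s in x..t, |f s - mxt|) + (t - x) * |mxt - m| := by
          rw [intervalIntegral.integral_add (hgi x t le_rfl hxt.le hty.le mxt)
            intervalIntegrable_const, intervalIntegral.integral_const, smul_eq_mul]
      _ = (∫ s in x..t, |f s - mxt|) + |∫ s in t..y, (f s - m)| := by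
          rw [← abs_neg (∫ s in t..y, (f s - m)), ← hneg, hconst, abs_mul,
            abs_of_pos htx']
  -- right piece bounds
  have hrightpt : ∀ s ∈ Set.Icc t y, |f s - m| ≤ |f y - m| + ε/2 := by
    intro s hs
    have hd : dist s y < δ := by
      rw [Real.dist_eq, abs_of_nonpos (by linarith [hs.2])]
      linarith [hs.1]
    have := hδ' hd
    rw [Real.dist_eq] at this
    calc |f s - m| = |(f s - f y) + (f y - m)| := by ring_nf
      _ ≤ |f s - f y| + |f y - m| := abs_add_le _ _
      _ ≤ |f y - m| + ε/2 := by linarith [le_of_lt this]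
  have hright : (∫ s in t..y, |f s - m|) ≤ (y - t) * (|f y - m| + ε/2) := by
    calc (∫ s in t..y, |f s - m|)
        ≤ ∫ s in t..y, (|f y - m| + ε/2) :=
          intervalIntegral.integral_mono_on hty.le (hgi t y hxt.le hty.le le_rfl m)
            intervalIntegrable_const hrightpt
      _ = (y - t) * (|f y - m| + ε/2) := by
          rw [intervalIntegral.integral_const, smul_eq_mul]
  have habs : |∫ s in t..y, (f s - m)| ≤ (y - t) * (|f y - m| + ε/2) :=
    le_trans (intervalIntegral.abs_integral_le_integral_abs hty.le) hright
  -- oscI f x t ≤ oscI f x y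
  have hmono : oscI f x t ≤ oscI f x y := by
    have := hsuper t hxt hty
    linarith [oscI_nonneg f hty.le]
  -- put it together
  have hxtval : (∫ s in x..t, |f s - mxt|) = (t - x) * oscI f x t := by
    rw [oscI, ← hmxt, ← mul_assoc, mul_inv_cancel₀ (ne_of_gt htx'), one_mul]
  have hxyval : (∫ s in x..y, |f s - m|) = (y - x) * oscI f x y := by
    rw [oscI, ← hm, ← mul_assoc, mul_inv_cancel₀ (ne_of_gt hxy'), one_mul]
  have hcombine : (y - x) * oscI f x y ≤
      (t - x) * oscI f x y + 2 * ((y - t) * (|f y - m| + ε/2)) := by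
    rw [← hxyval, hsplit]
    have : (t - x) * oscI f x t ≤ (t - x) * oscI f x y :=
      mul_le_mul_of_nonneg_left hmono htx'.le
    calc (∫ s in x..t, |f s - m|) + ∫ s in t..y, |f s - m|
        ≤ ((∫ s in x..t, |f s - mxt|) + |∫ s in t..y, (f s - m)|) + ∫ s in t..y, |f s - m| := by
          linarith [hleft]
      _ ≤ (t - x) * oscI f x t + (y - t) * (|f y - m| + ε/2) + (y - t) * (|f y - m| + ε/2) := by
          rw [hxtval]; linarith [habs, hright]
      _ ≤ (t - x) * oscI f x y + 2 * ((y - t) * (|f y - m| + ε/2)) := by linarith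
  -- conclude
  have : (y - t) * oscI f x y ≤ (y - t) * (2 * |f y - m| + ε) := by nlinarith
  have := le_of_mul_le_mul_left (by linarith : (y - t) * oscI f x y ≤ (y - t) * (2 * |f y - m| + ε)) hyt'
  linarith
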